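/- arXiv:1412.8301 — 2 statements merged into one kernel-verified Lean document; each statement's English description precedes it below -/
import Mathlib

section
/- With the notation of the well-preparedness function: f(u) = αu/(1+βu), α, β, η > 0, F the primitive of f with F(0)=0, and for fixed u ≥ 0, U(v) the unique solution of U + ηf(U) = u + ηv, define h(v) = F(u) + (η/2)v² − F(U(v)) − (η/2)f(U(v))². Then for each fixed u ≥ 0, the function v ↦ h(v) has a unique nonnegative root, namely v* = f(u); h is decreasing on [0, v*] and increasing on [v*, ∞). -/
/-- The well-preparedness function `h(v) = F(u) + (η/2)v² - F(U(v)) - (η/2)f(U(v))²`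
has a unique nonnegative root `v* = f(u)`; it is decreasing on `[0, v*]` and
increasing on `[v*, ∞)`. -/
theorem stmt11 (α β η : ℝ) (hα : 0 < α) (hβ : 0 < β) (hη : 0 < η)
    (f F : ℝ → ℝ) (hf : ∀ w, 0 ≤ w → f w = α * w / (1 + β * w))
    (hF0 : F 0 = 0) (hF' : ∀ w, 0 ≤ w → HasDerivAt F (f w) w)
    (u : ℝ) (hu : 0 ≤ u)
    (U : ℝ → ℝ) (hU : ∀ v, 0 ≤ v → 0 ≤ U v ∧ U v + η * f (U v) = u + η * v)
    (h : ℝ → ℝ)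
    (hh : ∀ v, h v = F u + (η / 2) * v ^ 2 - F (U v) - (η / 2) * (f (U v)) ^ 2) :
    (∀ v, 0 ≤ v → (h v = 0 ↔ v = f u)) ∧
    AntitoneOn h (Set.Icc 0 (f u)) ∧ MonotoneOn h (Set.Ici (f u)) := by
  have hfu0 : 0 ≤ f u := by
    rw [hf u hu]; positivity
  -- f is monotone on [0,∞)
  have fmono : ∀ a b, 0 ≤ a → a ≤ b → f a ≤ f b := by
    intro a b ha hab
    rw [hf a ha, hf b (ha.trans hab)]
    have h1 : 0 < 1 + β * a := by positivity
    have h2 : 0 < 1 + β * b := by nlinarith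
    rw [div_le_div_iff₀ h1 h2]
    nlinarith
  -- MVT bounds for F
  have key : ∀ w₁ w₂, 0 ≤ w₁ → w₁ ≤ w₂ →
      f w₁ * (w₂ - w₁) ≤ F w₂ - F w₁ ∧ F w₂ - F w₁ ≤ f w₂ * (w₂ - w₁) := by
    intro w₁ w₂ h0 hle
    rcases eq_or_lt_of_le hle with rfl | hlt
    · simp
    · have hcont : ContinuousOn F (Set.Icc w₁ w₂) := fun x hx =>
        ((hF' x (h0.trans hx.1)).continuousAt).continuousWithinAt
      obtain ⟨c, hc, hceq⟩ := exists_hasDerivAt_eq_slope F f hlt hcont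
        (fun x hx => hF' x (h0.trans hx.1.le))
      have hc1 : f w₁ ≤ f c := fmono w₁ c h0 hc.1.le
      have hc2 : f c ≤ f w₂ := fmono c w₂ (h0.trans hc.1.le) hc.2.le
      rw [eq_div_iff (by linarith : w₂ - w₁ ≠ 0)] at hceq
      constructor <;> nlinarith
  -- the map S w = w + η f w is strictly monotone on [0,∞)
  have Smono : ∀ a b, 0 ≤ a → 0 ≤ b → a < b → a + η * f a < b + η * f b := by
    intro a b ha hb hab
    have := fmono a b ha hab.le
    nlinarith
  have Sle : ∀ a b, 0 ≤ a → 0 ≤ b → a + η * f a ≤ b + η * f b → a ≤ b := by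
    intro a b ha hb hS
    by_contra hab
    push_neg at hab
    exact absurd hS (not_le.2 (Smono b a hb ha hab))
  have Sinj : ∀ a b, 0 ≤ a → 0 ≤ b → a + η * f a = b + η * f b → a = b := by
    intro a b ha hb hS
    exact le_antisymm (Sle a b ha hb hS.le) (Sle b a hb ha hS.ge)
  -- U (f u) = u
  have hUfu : U (f u) = u := by
    obtain ⟨h1, h2⟩ := hU (f u) hfu0
    exact Sinj (U (f u)) u h1 hu h2
  -- the auxiliary function G
  set G : ℝ → ℝ := fun w => F u - F w + (w - u) * f w + (w - u) ^ 2 / (2 * η) with hG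
  have h2η : (0:ℝ) < 2 * η := by linarith
  have hUG : ∀ v, 0 ≤ v → h v = G (U v) := by
    intro v hv
    obtain ⟨h1, h2⟩ := hU v hv
    rw [hh v]
    simp only [hG]
    set w := U v with hw
    have hηv : η * v = w - u + η * f w := by linarith
    have e1 : v = (w - u + η * f w) / η := by
      rw [eq_div_iff (ne_of_gt hη)]; linear_combination hηv
    rw [e1]; field_simp; ring
  have Gu : G u = 0 := by simp [hG]
  -- G decreasing on [0,u]
  have Ganti : ∀ w₁ w₂, 0 ≤ w₁ → w₁ ≤ w₂ → w₂ ≤ u → G w₂ ≤ G w₁ := by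
    intro w₁ w₂ h0 h12 h2u
    have hk := (key w₁ w₂ h0 h12).1
    have hfm := fmono w₁ w₂ h0 h12
    have expand : G w₁ - G w₂ =
        (2 * η * (F w₂ - F w₁ + (w₁ - u) * f w₁ - (w₂ - u) * f w₂)
          + (w₁ - u) ^ 2 - (w₂ - u) ^ 2) / (2 * η) := by
      simp only [hG]; field_simp; ring
    have hnum : 0 ≤ 2 * η * (F w₂ - F w₁ + (w₁ - u) * f w₁ - (w₂ - u) * f w₂)
          + (w₁ - u) ^ 2 - (w₂ - u) ^ 2 := by
      have hp : 0 ≤ (u - w₂) * (f w₂ - f w₁) :=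
        mul_nonneg (by linarith) (by linarith)
      have hq : 0 ≤ η * ((u - w₂) * (f w₂ - f w₁)) := mul_nonneg hη.le hp
      have hr : 0 ≤ η * ((F w₂ - F w₁) - f w₁ * (w₂ - w₁)) :=
        mul_nonneg hη.le (by linarith)
      have hs : 0 ≤ (2 * u - w₁ - w₂) * (w₂ - w₁) :=
        mul_nonneg (by linarith) (by linarith)
      nlinarith
    have : 0 ≤ G w₁ - G w₂ := by
      rw [expand]; exact div_nonneg hnum h2η.le
    linarith
  -- G increasing on [u,∞)
  have Gmono : ∀ w₁ w₂, u ≤ w₁ → w₁ ≤ w₂ → G w₁ ≤ G w₂ := by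
    intro w₁ w₂ h1u h12
    have h0 : 0 ≤ w₁ := hu.trans h1u
    have hk := (key w₁ w₂ h0 h12).2
    have hfm := fmono w₁ w₂ h0 h12
    have expand : G w₂ - G w₁ =
        (2 * η * (F w₁ - F w₂ + (w₂ - u) * f w₂ - (w₁ - u) * f w₁)
          + (w₂ - u) ^ 2 - (w₁ - u) ^ 2) / (2 * η) := by
      simp only [hG]; field_simp; ring
    have hnum : 0 ≤ 2 * η * (F w₁ - F w₂ + (w₂ - u) * f w₂ - (w₁ - u) * f w₁)
          + (w₂ - u) ^ 2 - (w₁ - u) ^ 2 := by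
      have hp : 0 ≤ (w₁ - u) * (f w₂ - f w₁) :=
        mul_nonneg (by linarith) (by linarith)
      have hq : 0 ≤ η * ((w₁ - u) * (f w₂ - f w₁)) := mul_nonneg hη.le hp
      have hr : 0 ≤ η * (f w₂ * (w₂ - w₁) - (F w₂ - F w₁)) :=
        mul_nonneg hη.le (by linarith)
      have hs : 0 ≤ (w₂ + w₁ - 2 * u) * (w₂ - w₁) :=
        mul_nonneg (by linarith) (by linarith)
      nlinarith
    have : 0 ≤ G w₂ - G w₁ := by
      rw [expand]; exact div_nonneg hnum h2η.le
    linarith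
  -- G is positive away from u
  have Gpos : ∀ w, 0 ≤ w → w ≠ u → 0 < G w := by
    intro w hw hne
    have hsq : 0 < (w - u) ^ 2 := by
      have : w - u ≠ 0 := sub_ne_zero.mpr hne
      positivity
    have hsq' : 0 < (w - u) ^ 2 / (2 * η) := div_pos hsq h2η
    simp only [hG]
    rcases lt_or_gt_of_ne hne with hlt | hgt
    · have hk := (key w u hw hlt.le).1
      nlinarith [hk, hsq']
    · have hk := (key u w hu hgt.le).2
      nlinarith [hk, hsq']
  -- U is monotone and tracks the root
  have hUmono : ∀ a b, 0 ≤ a → a ≤ b → U a ≤ U b := by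
    intro a b ha hab
    obtain ⟨ha1, ha2⟩ := hU a ha
    obtain ⟨hb1, hb2⟩ := hU b (ha.trans hab)
    exact Sle (U a) (U b) ha1 hb1 (by nlinarith)
  refine ⟨?_, ?_, ?_⟩
  · intro v hv
    rw [hUG v hv]
    obtain ⟨h1, h2⟩ := hU v hv
    constructor
    · intro hzero
      rcases eq_or_ne (U v) u with heq | hne
      · rw [heq] at h2
        have hfv : η * f u = η * v := by linarith
        have := mul_left_cancel₀ (ne_of_gt hη) hfv
        linarith
      · exact absurd hzero (ne_of_gt (Gpos (U v) h1 hne))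
    · rintro rfl
      rw [hUfu, Gu]
  · intro a ha b hb hab
    rw [hUG a ha.1, hUG b hb.1]
    obtain ⟨hb1, hb2⟩ := hU b hb.1
    have hUbu : U b ≤ u := by
      apply Sle (U b) u hb1 hu
      have := mul_le_mul_of_nonneg_left hb.2 hη.le
      linarith
    exact Ganti (U a) (U b) (hU a ha.1).1 (hUmono a b ha.1 hab) hUbu
  · intro a ha b hb hab
    have ha0 : 0 ≤ a := hfu0.trans ha
    have hb0 : 0 ≤ b := hfu0.trans hb
    rw [hUG a ha0, hUG b hb0]
    obtain ⟨ha1, ha2⟩ := hU a ha0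
    have huUa : u ≤ U a := by
      apply Sle u (U a) hu ha1
      have := mul_le_mul_of_nonneg_left (Set.mem_Ici.mp ha) hη.le
      linarith
    exact Gmono (U a) (U b) huUa (hUmono a b ha0 hab)
end

section
/- Riesz–Fréchet–Kolmogorov variant: Let (μ_ε)_{ε>0} be a family of functions bounded in L^∞(0,T), and suppose there exists a constant C such that for all small h > 0 and all ε > 0: ∫₀^{T−h} |μ_ε(t+h) − μ_ε(t)| dt ≤ C(√h + ε). Then there exist a sequence εₙ → 0 and μ ∈ L¹(0,T) such that μ_{εₙ} → μ in L¹(0,T). -/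
/-!
Truncation at level `M` leaves each `μ ε` unchanged almost everywhere on `(0,T)`, so the family
may be assumed bounded by `M` everywhere. Its primitives are then `M`-Lipschitz, and a diagonal
argument over the rationals yields a subsequence along which every integral `∫ₐᵇ g_k` converges.
For fixed `h`, the Steklov averages `t ↦ ⨍_t^{t+h} g_k` therefore converge boundedly pointwise,
hence in `L¹(0,T)`, while averaging the translation estimate over the shifts in `(0,h]` puts them
within `C(√h + ε_k) + 2Mh` of `g_k` in `L¹(0,T)`. Letting `h → 0` shows that the subsequence is
Cauchy in the complete space `L¹(0,T)`.
-/

open MeasureTheory Filter Topology Set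
open scoped NNReal

theorem cauchySeq_of_forall_eventually_dist_le {X ι : Type*} [PseudoMetricSpace X]
    [Nonempty ι] [SemilatticeSup ι] {x : ι → X}
    (h : ∀ δ > 0, ∃ y : ι → X, CauchySeq y ∧ ∀ᶠ n in atTop, dist (x n) (y n) ≤ δ) :
    CauchySeq x := by
  rw [Metric.cauchySeq_iff]
  intro δ hδ
  obtain ⟨y, hy, hxy⟩ := h (δ / 4) (by positivity)
  obtain ⟨N₁, hN₁⟩ := Metric.cauchySeq_iff.1 hy (δ / 4) (by positivity)
  obtain ⟨N₂, hN₂⟩ := eventually_atTop.1 hxy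
  refine ⟨N₁ ⊔ N₂, fun m hm n hn => ?_⟩
  calc dist (x m) (x n) ≤ dist (x m) (y m) + dist (y m) (y n) + dist (y n) (x n) :=
        dist_triangle4 _ _ _ _
    _ < δ := by
      rw [dist_comm (y n)]
      linarith [hN₂ m (le_sup_right.trans hm), hN₂ n (le_sup_right.trans hn),
        hN₁ m (le_sup_left.trans hm) n (le_sup_left.trans hn)]

theorem EquicontinuousAt.cauchySeq_of_mem_closure {X Y ι : Type*} [TopologicalSpace X]
    [PseudoMetricSpace Y] [Nonempty ι] [SemilatticeSup ι] {F : ι → X → Y} {x : X}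
    (hF : EquicontinuousAt F x) {s : Set X} (hx : x ∈ closure s)
    (hs : ∀ y ∈ s, CauchySeq (F · y)) : CauchySeq (F · x) := by
  refine cauchySeq_of_forall_eventually_dist_le fun δ hδ => ?_
  obtain ⟨y, hy, hys⟩ :=
    mem_closure_iff_nhds.1 hx _ (Metric.equicontinuousAt_iff_right.1 hF δ hδ)
  exact ⟨(F · y), hs y hys, Eventually.of_forall fun n => (hy n).le⟩

theorem exists_strictMono_forall_tendsto_of_lipschitzWith {K : ℝ≥0} {F : ℕ → ℝ → ℝ}
    (hF : ∀ n, LipschitzWith K (F n)) (hF₀ : ∀ n, F n 0 = 0) :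
    ∃ φ : ℕ → ℕ, StrictMono φ ∧ ∀ t, ∃ L, Tendsto (fun k => F (φ k) t) atTop (𝓝 L) := by
  -- `ℚ → ℝ` is metrizable, so Tychonoff yields a subsequence converging at every rational;
  -- equicontinuity then propagates the convergence to every real.
  set box : Set (ℚ → ℝ) := univ.pi fun q : ℚ => Icc (-(K * |(q : ℝ)|)) (K * |(q : ℝ)|)
  have hcompact : IsCompact box := isCompact_univ_pi fun q => isCompact_Icc
  have hmem : ∀ n, (fun q : ℚ => F n q) ∈ box := by
    intro n q _
    have := (hF n).dist_le_mul q 0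
    rw [hF₀, Real.dist_eq, Real.dist_eq, sub_zero, sub_zero] at this
    exact abs_le.1 this
  obtain ⟨a, -, φ, hφ, hφa⟩ := hcompact.tendsto_subseq hmem
  refine ⟨φ, hφ, fun t => cauchySeq_tendsto_of_complete ?_⟩
  have hequi := (LipschitzWith.uniformEquicontinuous _ K fun k => hF (φ k)).equicontinuous t
  refine hequi.cauchySeq_of_mem_closure (s := range ((↑) : ℚ → ℝ)) (Rat.denseRange_cast t) ?_
  rintro _ ⟨q, rfl⟩
  exact (tendsto_pi_nhds.1 hφa q).cauchySeq

theorem lipschitzWith_primitive_of_abs_le {f : ℝ → ℝ} {M : ℝ≥0}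
    (hf : ∀ a b, IntervalIntegrable f volume a b) (hM : ∀ t, |f t| ≤ M) :
    LipschitzWith M fun t => ∫ s in (0 : ℝ)..t, f s := by
  refine LipschitzWith.of_dist_le_mul fun x y => ?_
  rw [Real.dist_eq, Real.dist_eq, intervalIntegral.integral_interval_sub_left (hf 0 x) (hf 0 y),
    ← Real.norm_eq_abs]
  exact intervalIntegral.norm_integral_le_of_norm_le_const fun t _ =>
    (Real.norm_eq_abs _).trans_le (hM t)

theorem exists_strictMono_forall_tendsto_intervalIntegral {g : ℕ → ℝ → ℝ} {M : ℝ}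
    (hg : ∀ n a b, IntervalIntegrable (g n) volume a b) (hM : ∀ n t, |g n t| ≤ M) :
    ∃ φ : ℕ → ℕ, StrictMono φ ∧
      ∀ a b, ∃ L, Tendsto (fun k => ∫ s in a..b, g (φ k) s) atTop (𝓝 L) := by
  obtain ⟨φ, hφ, hlim⟩ := exists_strictMono_forall_tendsto_of_lipschitzWith
    (fun n => lipschitzWith_primitive_of_abs_le (M := M.toNNReal) (hg n)
      fun t => (hM n t).trans (le_max_left _ _)) fun n => intervalIntegral.integral_same
  refine ⟨φ, hφ, fun a b => ?_⟩
  obtain ⟨La, ha⟩ := hlim a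
  obtain ⟨Lb, hb⟩ := hlim b
  refine ⟨Lb - La, (hb.sub ha).congr fun k => ?_⟩
  exact intervalIntegral.integral_interval_sub_left (hg _ 0 b) (hg _ 0 a)

section L1

variable {α : Type*} [MeasurableSpace α] {μ : Measure α}

theorem integrableOn_of_abs_le {f : α → ℝ} {s : Set α} {M : ℝ} (hs : μ s ≠ ⊤)
    (hf : AEStronglyMeasurable f μ) (hM : ∀ a, |f a| ≤ M) :
    IntegrableOn f s μ :=
  Measure.integrableOn_of_bounded hs hf (ae_of_all _ fun a => (Real.norm_eq_abs _).trans_le (hM a))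

theorem MeasureTheory.Integrable.dist_toL1_toL1 {f g : α → ℝ} (hf : Integrable f μ)
    (hg : Integrable g μ) :
    dist (hf.toL1 f) (hg.toL1 g) = ∫ a, |f a - g a| ∂μ := by
  rw [dist_eq_norm, ← Integrable.toL1_sub, L1.norm_of_fun_eq_integral_norm]
  rfl

theorem cauchySeq_toL1_of_tendsto_of_abs_le [IsFiniteMeasure μ] {F : ℕ → α → ℝ} {M : ℝ}
    (hF : ∀ n, Integrable (F n) μ) (hM : ∀ n, ∀ᵐ a ∂μ, |F n a| ≤ M)
    (hlim : ∀ a, ∃ L, Tendsto (F · a) atTop (𝓝 L)) :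
    CauchySeq fun n => (hF n).toL1 (F n) := by
  choose f hf using hlim
  have hfM : ∀ᵐ a ∂μ, |f a| ≤ M := by
    filter_upwards [ae_all_iff.2 hM] with a ha
    exact le_of_tendsto' (hf a).abs ha
  have hfi : Integrable f μ := (integrable_const M).mono'
    (aestronglyMeasurable_of_tendsto_ae atTop (fun n => (hF n).1) (ae_of_all _ hf)) hfM
  refine (tendsto_iff_dist_tendsto_zero.2 ?_ : Tendsto _ atTop (𝓝 (hfi.toL1 f))).cauchySeq
  simp_rw [Integrable.dist_toL1_toL1]
  simpa using tendsto_integral_of_dominated_convergence (fun _ => M + M)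
    (fun n => ((hF n).sub hfi).abs.1) (integrable_const _)
    (fun n => by
      filter_upwards [hM n, hfM] with a ha hfa
      rw [Real.norm_eq_abs, abs_abs]
      exact (abs_sub _ _).trans (add_le_add ha hfa))
    (ae_of_all _ fun a => ((hf a).sub_const (f a)).abs)

theorem exists_tendsto_integral_abs_sub_of_cauchySeq {f : ℕ → α → ℝ}
    (hf : ∀ n, Integrable (f n) μ) (hcauchy : CauchySeq fun n => (hf n).toL1 (f n)) :
    ∃ ν : α → ℝ, Integrable ν μ ∧ Tendsto (fun n => ∫ a, |f n a - ν a| ∂μ) atTop (𝓝 0) := by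
  obtain ⟨ν, hν⟩ := cauchySeq_tendsto_of_complete hcauchy
  refine ⟨ν, L1.integrable_coeFn ν, ?_⟩
  refine (tendsto_iff_dist_tendsto_zero.1 hν).congr fun n => ?_
  rw [← (hf n).dist_toL1_toL1 (L1.integrable_coeFn ν), Integrable.toL1_coeFn]

theorem exists_measurable_abs_le_ae_eq {f : α → ℝ} {M : ℝ} (hM : 0 ≤ M) (hf : Measurable f)
    (hfM : ∀ᵐ a ∂μ, |f a| ≤ M) :
    ∃ g : α → ℝ, Measurable g ∧ (∀ a, |g a| ≤ M) ∧ g =ᵐ[μ] f := by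
  refine ⟨fun a => max (-M) (min M (f a)), measurable_const.max (measurable_const.min hf),
    fun a => abs_le.2 ⟨le_max_left _ _, max_le (by linarith) (min_le_left _ _)⟩, ?_⟩
  filter_upwards [hfM] with a ha
  rw [abs_le] at ha
  simp only [min_eq_right ha.2, max_eq_right ha.1]

end L1

theorem intervalIntegrable_of_abs_le {f : ℝ → ℝ} {M : ℝ} (hf : Measurable f)
    (hM : ∀ t, |f t| ≤ M) (a b : ℝ) : IntervalIntegrable f volume a b :=
  intervalIntegrable_iff.2 <|
    integrableOn_of_abs_le measure_Ioc_lt_top.ne hf.aestronglyMeasurable hM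

theorem abs_intervalAverage_le {f : ℝ → ℝ} {M : ℝ} (hM : ∀ t, |f t| ≤ M) (a b : ℝ) :
    |⨍ s in a..b, f s| ≤ M := by
  rcases eq_or_ne a b with rfl | hab
  · simpa using (abs_nonneg _).trans (hM 0)
  have hba : 0 < |b - a| := abs_pos.2 (sub_ne_zero.2 hab.symm)
  rw [interval_average_eq, smul_eq_mul, abs_mul, abs_inv, inv_mul_le_iff₀ hba, mul_comm]
  exact intervalIntegral.norm_integral_le_of_norm_le_const fun t _ =>
    (Real.norm_eq_abs _).trans_le (hM t)

theorem continuous_intervalAverage_add {f : ℝ → ℝ} (hf : ∀ a b, IntervalIntegrable f volume a b)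
    (h : ℝ) : Continuous fun t => ⨍ s in t..t + h, f s := by
  have hprim := intervalIntegral.continuous_primitive hf 0
  have heq : (fun t => ⨍ s in t..t + h, f s)
      = fun t => h⁻¹ * ((∫ s in (0 : ℝ)..t + h, f s) - ∫ s in (0 : ℝ)..t, f s) := by
    funext t
    rw [interval_average_eq, add_sub_cancel_left, smul_eq_mul,
      intervalIntegral.integral_interval_sub_left (hf 0 _) (hf 0 _)]
  rw [heq]
  exact continuous_const.mul ((hprim.comp (continuous_add_const h)).sub hprim)

theorem abs_sub_intervalAverage_le {f : ℝ → ℝ} (hf : ∀ a b, IntervalIntegrable f volume a b)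
    {h : ℝ} (hh : 0 < h) (t : ℝ) :
    |f t - ⨍ s in t..t + h, f s| ≤ h⁻¹ * ∫ s in Ioc 0 h, |f (t + s) - f t| := by
  have hshift : ∫ s in t..t + h, f s = ∫ s in (0 : ℝ)..h, f (t + s) := by
    simp [intervalIntegral.integral_comp_add_left]
  have hi : IntervalIntegrable (fun s => f (t + s)) volume 0 h := by
    simpa using (hf (t + 0) (t + h)).comp_add_left t
  have hsub : f t - ⨍ s in t..t + h, f s = h⁻¹ * ∫ s in (0 : ℝ)..h, (f t - f (t + s)) := by
    rw [interval_average_eq, add_sub_cancel_left, hshift, smul_eq_mul,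
      intervalIntegral.integral_sub intervalIntegrable_const hi, intervalIntegral.integral_const,
      smul_eq_mul]
    field_simp
    ring
  rw [hsub, abs_mul, abs_of_pos (inv_pos.2 hh), ← intervalIntegral.integral_of_le hh.le]
  gcongr
  simpa [abs_sub_comm] using intervalIntegral.abs_integral_le_integral_abs hh.le

theorem setIntegral_abs_sub_intervalAverage_le {f : ℝ → ℝ} (hf : Measurable f) {M : ℝ}
    (hM : ∀ t, |f t| ≤ M) {S : Set ℝ} (hS : volume S ≠ ⊤) {h K : ℝ} (hh : 0 < h)
    (hK : ∀ s ∈ Ioc 0 h, ∫ t in S, |f (t + s) - f t| ≤ K) :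
    ∫ t in S, |f t - ⨍ s in t..t + h, f s| ≤ K := by
  have : IsFiniteMeasure (volume.restrict S) := isFiniteMeasure_restrict.2 hS
  set D : ℝ → ℝ → ℝ := fun t s => |f (t + s) - f t|
  have hD : Integrable (Function.uncurry D)
      ((volume.restrict S).prod (volume.restrict (Ioc 0 h))) := by
    refine (integrable_const (M + M)).mono'
      (((hf.comp measurable_add).sub (hf.comp measurable_fst)).abs.aestronglyMeasurable)
      (ae_of_all _ fun p => ?_)
    rw [Real.norm_eq_abs, Function.uncurry_apply_pair, abs_abs]
    exact (abs_sub _ _).trans (add_le_add (hM _) (hM _))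
  calc ∫ t in S, |f t - ⨍ s in t..t + h, f s|
      ≤ ∫ t in S, h⁻¹ * ∫ s in Ioc 0 h, D t s :=
        integral_mono_of_nonneg (ae_of_all _ fun t => abs_nonneg _)
          (hD.integral_prod_left.const_mul _)
          (ae_of_all _ (abs_sub_intervalAverage_le (intervalIntegrable_of_abs_le hf hM) hh))
    _ = h⁻¹ * ∫ s in Ioc 0 h, ∫ t in S, D t s := by
        rw [integral_const_mul, integral_integral_swap hD]
    _ ≤ h⁻¹ * ∫ s in Ioc 0 h, K := by
        refine mul_le_mul_of_nonneg_left ?_ (inv_nonneg.2 hh.le)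
        exact setIntegral_mono_on hD.integral_prod_right (integrableOn_const measure_Ioc_lt_top.ne)
          measurableSet_Ioc hK
    _ = K := by
        rw [setIntegral_const, Real.volume_real_Ioc_of_le hh.le, smul_eq_mul, sub_zero]
        field_simp

theorem setIntegral_Ioo_le_add_of_le {f : ℝ → ℝ} {a b c B : ℝ} (hac : a < c) (hcb : c ≤ b)
    (hf : IntegrableOn f (Ioo a b)) (hB : ∀ t ∈ Ico c b, f t ≤ B) :
    ∫ t in Ioo a b, f t ≤ (∫ t in Ioo a c, f t) + B * (b - c) := by
  rw [← Ioo_union_Ico_eq_Ioo hac hcb] at hf ⊢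
  rw [setIntegral_union (Ico_disjoint_Ico_same.mono_left Ioo_subset_Ico_self) measurableSet_Ico
    (hf.mono_set subset_union_left) (hf.mono_set subset_union_right)]
  gcongr
  calc ∫ t in Ico c b, f t ≤ ∫ _ in Ico c b, B :=
        setIntegral_mono_on (hf.mono_set subset_union_right)
          (integrableOn_const measure_Ico_lt_top.ne) measurableSet_Ico hB
    _ = B * (b - c) := by
        rw [setIntegral_const, Real.volume_real_Ico_of_le hcb, smul_eq_mul, mul_comm]

theorem setIntegral_Ioo_abs_sub_intervalAverage_le {f : ℝ → ℝ} (hf : Measurable f) {M T h K : ℝ}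
    (hM : ∀ t, |f t| ≤ M) (hh : 0 < h) (hhT : h < T)
    (hK : ∀ s ∈ Ioc 0 h, ∫ t in Ioo 0 (T - s), |f (t + s) - f t| ≤ K) :
    ∫ t in Ioo 0 T, |f t - ⨍ s in t..t + h, f s| ≤ K + (M + M) * h := by
  have hfi : IntegrableOn f (Ioo 0 T) :=
    integrableOn_of_abs_le measure_Ioo_lt_top.ne hf.aestronglyMeasurable hM
  have hAi : IntegrableOn (fun t => ⨍ s in t..t + h, f s) (Ioo 0 T) :=
    integrableOn_of_abs_le measure_Ioo_lt_top.ne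
      (continuous_intervalAverage_add (intervalIntegrable_of_abs_le hf hM) h).aestronglyMeasurable
      fun t => abs_intervalAverage_le hM _ _
  calc ∫ t in Ioo 0 T, |f t - ⨍ s in t..t + h, f s|
      ≤ (∫ t in Ioo 0 (T - h), |f t - ⨍ s in t..t + h, f s|) + (M + M) * (T - (T - h)) :=
        setIntegral_Ioo_le_add_of_le (by linarith) (by linarith) (hfi.sub hAi).abs fun t _ =>
          (abs_sub _ _).trans (add_le_add (hM t) (abs_intervalAverage_le hM _ _))
    _ ≤ K + (M + M) * h := by
        rw [sub_sub_cancel]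
        gcongr
        refine setIntegral_abs_sub_intervalAverage_le hf hM measure_Ioo_lt_top.ne hh
          fun s hs => (setIntegral_mono_set ?_ (ae_of_all _ fun t => abs_nonneg _)
            (Ioo_subset_Ioo_right (by linarith [hs.2])).eventuallyLE).trans (hK s hs)
        exact integrableOn_of_abs_le measure_Ioo_lt_top.ne
          (((hf.comp (measurable_add_const s)).sub hf).abs.aestronglyMeasurable) fun t => by
            rw [abs_abs]
            exact (abs_sub _ _).trans (add_le_add (hM _) (hM t))

theorem exists_tendsto_integral_abs_sub_of_translation {T M h₀ : ℝ} (hT : 0 < T)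
    (hh₀ : 0 < h₀) {g : ℕ → ℝ → ℝ} (hmeas : ∀ n, Measurable (g n)) (hM : ∀ n t, |g n t| ≤ M)
    (hconv : ∀ a b, ∃ L, Tendsto (fun n => ∫ s in a..b, g n s) atTop (𝓝 L))
    {ω : ℝ → ℝ} (hω : Tendsto ω (𝓝[>] 0) (𝓝 0)) (hω_mono : MonotoneOn ω (Ioi 0))
    {e : ℕ → ℝ} (he : Tendsto e atTop (𝓝 0))
    (htrans : ∀ s ∈ Ioo 0 h₀, ∀ n, ∫ t in Ioo 0 (T - s), |g n (t + s) - g n t| ≤ ω s + e n) :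
    ∃ ν : ℝ → ℝ, IntegrableOn ν (Ioo 0 T) ∧
      Tendsto (fun n => ∫ t in Ioo 0 T, |g n t - ν t|) atTop (𝓝 0) := by
  have hg : ∀ n, Integrable (g n) (volume.restrict (Ioo 0 T)) := fun n =>
    integrableOn_of_abs_le measure_Ioo_lt_top.ne (hmeas n).aestronglyMeasurable (hM n)
  refine exists_tendsto_integral_abs_sub_of_cauchySeq hg
    (cauchySeq_of_forall_eventually_dist_le fun δ hδ => ?_)
  have hsmall : ∀ᶠ h in 𝓝[>] 0, ((0 < h ∧ h < h₀) ∧ h < T) ∧ ω h + (M + M) * h < δ / 2 := by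
    have hlin : Tendsto (fun h => ω h + (M + M) * h) (𝓝[>] 0) (𝓝 0) := by
      simpa using hω.add ((tendsto_id.const_mul (M + M)).mono_left nhdsWithin_le_nhds)
    exact ((eventually_mem_nhdsWithin.and
      (eventually_nhdsWithin_of_eventually_nhds (eventually_lt_nhds hh₀))).and
      (eventually_nhdsWithin_of_eventually_nhds (eventually_lt_nhds hT))).and
      (hlin.eventually_lt_const (by positivity))
  obtain ⟨h, ⟨⟨hh, hhh₀⟩, hhT⟩, hωh⟩ := hsmall.exists
  have hA : ∀ n, Integrable (fun t => ⨍ s in t..t + h, g n s) (volume.restrict (Ioo 0 T)) :=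
    fun n => integrableOn_of_abs_le measure_Ioo_lt_top.ne
      (continuous_intervalAverage_add (intervalIntegrable_of_abs_le (hmeas n) (hM n))
        h).aestronglyMeasurable
      fun t => abs_intervalAverage_le (hM n) _ _
  refine ⟨fun n => (hA n).toL1 _, cauchySeq_toL1_of_tendsto_of_abs_le hA
    (fun n => ae_of_all _ fun t => abs_intervalAverage_le (hM n) _ _) fun t => ?_, ?_⟩
  · obtain ⟨L, hL⟩ := hconv t (t + h)
    exact ⟨_, by simpa only [interval_average_eq] using hL.const_smul (t + h - t)⁻¹⟩
  filter_upwards [he.eventually_lt_const (half_pos hδ)] with n hn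
  have hK : ∀ s ∈ Ioc 0 h, ∫ t in Ioo 0 (T - s), |g n (t + s) - g n t| ≤ ω h + e n :=
    fun s hs => (htrans s ⟨hs.1, hs.2.trans_lt hhh₀⟩ n).trans
      (add_le_add_left (hω_mono hs.1 hh hs.2) _)
  rw [(hg n).dist_toL1_toL1 (hA n)]
  linarith [setIntegral_Ioo_abs_sub_intervalAverage_le (hmeas n) (hM n) hh hhT hK]

theorem setIntegral_Ioo_abs_sub_add_congr_ae {f g : ℝ → ℝ} {T s : ℝ} (hs : 0 ≤ s)
    (hfg : f =ᵐ[volume.restrict (Ioo 0 T)] g) :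
    ∫ t in Ioo 0 (T - s), |f (t + s) - f t| = ∫ t in Ioo 0 (T - s), |g (t + s) - g t| := by
  have hfg' := (ae_restrict_iff' measurableSet_Ioo).1 hfg
  have hshift : ∀ᵐ t, t + s ∈ Ioo 0 T → f (t + s) = g (t + s) :=
    (measurePreserving_add_right volume s).quasiMeasurePreserving.ae hfg'
  refine integral_congr_ae ?_
  filter_upwards [ae_restrict_of_ae hfg', ae_restrict_of_ae hshift,
    ae_restrict_mem measurableSet_Ioo] with t ht hts htT
  rw [ht ⟨htT.1, by linarith [htT.2]⟩, hts ⟨by linarith [htT.1], by linarith [htT.2]⟩]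

/-- Riesz–Fréchet–Kolmogorov variant with `ε`-dependent error: a family bounded
in `L^∞(0,T)` whose time translates satisfy
`∫₀^{T-h} |μ_ε(t+h) - μ_ε(t)| dt ≤ C(√h + ε)` admits a sequence `εₙ → 0` along
which it converges in `L¹(0,T)`. -/
theorem stmt15 (T C M : ℝ) (hT : 0 < T)
    (μ : ℝ → ℝ → ℝ)
    (hmeas : ∀ ε : ℝ, 0 < ε → Measurable (μ ε))
    (hbdd : ∀ ε : ℝ, 0 < ε → ∀ᵐ t ∂(volume.restrict (Set.Ioo 0 T)), |μ ε t| ≤ M)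
    (htrans : ∃ h₀ : ℝ, 0 < h₀ ∧ ∀ h : ℝ, 0 < h → h < h₀ → ∀ ε : ℝ, 0 < ε →
      ∫ t in Set.Ioo 0 (T - h), |μ ε (t + h) - μ ε t| ≤ C * (Real.sqrt h + ε)) :
    ∃ (εn : ℕ → ℝ) (ν : ℝ → ℝ), (∀ n, 0 < εn n) ∧ Tendsto εn atTop (nhds 0) ∧
      IntegrableOn ν (Set.Ioo 0 T) ∧
      Tendsto (fun n => ∫ t in Set.Ioo 0 T, |μ (εn n) t - ν t|) atTop (nhds 0) := by
  obtain ⟨h₀, hh₀, htr⟩ := htrans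
  have hM : 0 ≤ M := by
    have : (ae (volume.restrict (Ioo 0 T))).NeBot := ae_restrict_neBot.2 (by simp [hT])
    obtain ⟨t, ht⟩ := (hbdd 1 one_pos).exists
    exact (abs_nonneg _).trans ht
  have hC : 0 ≤ C := nonneg_of_mul_nonneg_left ((integral_nonneg fun t => abs_nonneg _).trans
    (htr _ (half_pos hh₀) (half_lt_self hh₀) 1 one_pos)) (by positivity)
  set ε : ℕ → ℝ := fun n => 1 / ((n : ℝ) + 1)
  have hε : ∀ n, 0 < ε n := fun n => by positivity
  choose g hg_meas hg_bdd hg_ae using fun n =>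
    exists_measurable_abs_le_ae_eq hM (hmeas _ (hε n)) (hbdd _ (hε n))
  obtain ⟨φ, hφ, hconv⟩ := exists_strictMono_forall_tendsto_intervalIntegral
    (fun n => intervalIntegrable_of_abs_le (hg_meas n) (hg_bdd n)) hg_bdd
  have hεφ : Tendsto (fun k => ε (φ k)) atTop (𝓝 0) :=
    tendsto_one_div_add_atTop_nhds_zero_nat.comp hφ.tendsto_atTop
  obtain ⟨ν, hν, hlim⟩ := exists_tendsto_integral_abs_sub_of_translation hT hh₀
    (g := fun k => g (φ k)) (fun k => hg_meas _) (fun k => hg_bdd _) hconv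
    (ω := fun s => C * √s)
    (by simpa using ((Real.continuous_sqrt.tendsto 0).const_mul C).mono_left nhdsWithin_le_nhds)
    (fun x _ y _ hxy => mul_le_mul_of_nonneg_left (Real.sqrt_le_sqrt hxy) hC)
    (e := fun k => C * ε (φ k)) (by simpa using hεφ.const_mul C) fun s hs k => by
      rw [setIntegral_Ioo_abs_sub_add_congr_ae hs.1.le (hg_ae _), ← mul_add]
      exact htr s hs.1 hs.2 _ (hε _)
  refine ⟨fun k => ε (φ k), ν, fun k => hε _, hεφ, hν, hlim.congr fun k => integral_congr_ae ?_⟩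
  filter_upwards [hg_ae (φ k)] with t ht
  rw [ht]
end
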